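/- arXiv:1311.0433 — 2 statements merged into one kernel-verified Lean document; each statement's English description precedes it below -/
import Mathlib

section
/- Let T be the composition T^(K-1) ∘ ⋯ ∘ T^(1) on vectors of K positive reals, where each T^(j) uses a mapping Ω satisfying Ω(z1,z2)+z1z2/Ω(z1,z2) ≤ z1+z2 with equality iff z1=z2. Then F(T(x)) ≤ F(x) where F(x) = Σ x_k, and F(T(x)) = F(x) implies x_1 = x_2 = ⋯ = x_K. -/
/-- The elementary transformation `T^(j)` (0-based index `j`): replaces entries
`j` and `j+1` of `x` by `Ω (x j) (x (j+1))` and `x j * x (j+1) / Ω (x j) (x (j+1))`. -/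
noncomputable def Tj {K : ℕ} (Ω : ℝ → ℝ → ℝ) (j : ℕ) (x : Fin K → ℝ) : Fin K → ℝ :=
  fun k =>
    if h : j + 1 < K then
      if (k : ℕ) = j then Ω (x ⟨j, by omega⟩) (x ⟨j + 1, h⟩)
      else if (k : ℕ) = j + 1 then
        x ⟨j, by omega⟩ * x ⟨j + 1, h⟩ / Ω (x ⟨j, by omega⟩) (x ⟨j + 1, h⟩)
      else x k
    else x k

/-- The full sweep `T = T^(K-1) ∘ ⋯ ∘ T^(1)` (0-based: `j = 0, …, K-2`,
applied in increasing order of `j`). -/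
noncomputable def Tfull {K : ℕ} (Ω : ℝ → ℝ → ℝ) (x : Fin K → ℝ) : Fin K → ℝ :=
  (List.range (K - 1)).foldl (fun y j => Tj Ω j y) x

/-!
Each elementary step `T^(j)` changes the sum by `Ω(a, b) + ab/Ω(a, b) - (a + b) ≤ 0`, where
`a, b` are the entries it replaces, and keeps all entries positive; so the sum can only decrease
along the sweep. If the sum of `T(x)` equals that of `x`, every step is an equality case: the entries
it sees are equal, and then `Ω(a, a) = a` (from `(Ω - a)² = 0`) shows that the step leaves the vector
unchanged. Hence each step sees the original entries `x_j, x_{j+1}`, and all adjacent entries agree.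
-/

lemma eq_of_add_mul_self_div_eq {w z : ℝ} (hw : w ≠ 0) (h : w + z * z / w = z + z) : w = z := by
  field_simp at h
  nlinarith [sq_nonneg (w - z)]

lemma Fin.eq_of_forall_adjacent_eq {α : Type*} {K : ℕ} (f : Fin K → α)
    (h : ∀ j (hj : j + 1 < K), f ⟨j, by omega⟩ = f ⟨j + 1, hj⟩) (k k' : Fin K) : f k = f k' := by
  have hK : 0 < K := k.pos
  have to_zero : ∀ i (hi : i < K), f ⟨i, hi⟩ = f ⟨0, hK⟩ := by
    intro i
    induction i with
    | zero => exact fun _ => rfl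
    | succ i ih => exact fun hi => (h i hi).symm.trans (ih (by omega))
  exact (to_zero k k.2).trans (to_zero k' k'.2).symm

section Tj

variable {K : ℕ} (Ω : ℝ → ℝ → ℝ) (j : ℕ) (x : Fin K → ℝ)

lemma Tj_of_not_lt (hj : ¬ j + 1 < K) : Tj Ω j x = x := by
  funext k
  simp [Tj, hj]

lemma Tj_apply_of_ne (k : Fin K) (h₁ : (k : ℕ) ≠ j) (h₂ : (k : ℕ) ≠ j + 1) :
    Tj Ω j x k = x k := by
  simp [Tj, h₁, h₂]

variable {j}

lemma Tj_apply_left (hj : j + 1 < K) :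
    Tj Ω j x ⟨j, by omega⟩ = Ω (x ⟨j, by omega⟩) (x ⟨j + 1, hj⟩) := by
  simp [Tj, hj]

lemma Tj_apply_right (hj : j + 1 < K) :
    Tj Ω j x ⟨j + 1, hj⟩ =
      x ⟨j, by omega⟩ * x ⟨j + 1, hj⟩ / Ω (x ⟨j, by omega⟩) (x ⟨j + 1, hj⟩) := by
  simp [Tj, hj]

lemma sum_Tj (hj : j + 1 < K) :
    ∑ k, Tj Ω j x k = ∑ k, x k +
      (Ω (x ⟨j, by omega⟩) (x ⟨j + 1, hj⟩) +
        x ⟨j, by omega⟩ * x ⟨j + 1, hj⟩ / Ω (x ⟨j, by omega⟩) (x ⟨j + 1, hj⟩) -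
        (x ⟨j, by omega⟩ + x ⟨j + 1, hj⟩)) := by
  set a : Fin K := ⟨j, by omega⟩
  set b : Fin K := ⟨j + 1, hj⟩
  have hab : a ≠ b := by simp [a, b, Fin.ext_iff]
  have hrest : ∀ k ∈ Finset.univ, k ∉ ({a, b} : Finset (Fin K)) → Tj Ω j x k - x k = 0 := by
    intro k _ hk
    simp only [Finset.mem_insert, Finset.mem_singleton, not_or, a, b, Fin.ext_iff] at hk
    rw [Tj_apply_of_ne Ω j x k hk.1 hk.2, sub_self]
  have hdiff : ∑ k, (Tj Ω j x k - x k) = Tj Ω j x a - x a + (Tj Ω j x b - x b) := by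
    rw [← Finset.sum_subset (Finset.subset_univ _) hrest, Finset.sum_pair hab]
  rw [Finset.sum_sub_distrib, Tj_apply_left Ω x hj, Tj_apply_right Ω x hj] at hdiff
  linarith

lemma Tj_eq_self_of_eq (hj : j + 1 < K) (hΩ : Ω (x ⟨j, by omega⟩) (x ⟨j + 1, hj⟩) = x ⟨j, by omega⟩)
    (hx : x ⟨j, by omega⟩ = x ⟨j + 1, hj⟩) : Tj Ω j x = x := by
  funext k
  by_cases h₁ : (k : ℕ) = j
  · rw [show k = ⟨j, by omega⟩ from Fin.ext h₁]
    rw [Tj_apply_left Ω x hj, hΩ]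
  by_cases h₂ : (k : ℕ) = j + 1
  · rw [show k = ⟨j + 1, hj⟩ from Fin.ext h₂]
    rw [Tj_apply_right Ω x hj, hΩ, ← hx, mul_self_div_self]
  exact Tj_apply_of_ne Ω j x k h₁ h₂

end Tj

section Sweep

variable {K : ℕ} {Ω : ℝ → ℝ → ℝ}
  (hΩpos : ∀ z1 z2 : ℝ, 0 < z1 → 0 < z2 → 0 < Ω z1 z2)
  (hΩ : ∀ z1 z2 : ℝ, 0 < z1 → 0 < z2 →
      Ω z1 z2 + z1 * z2 / Ω z1 z2 ≤ z1 + z2 ∧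
      (Ω z1 z2 + z1 * z2 / Ω z1 z2 = z1 + z2 ↔ z1 = z2))

include hΩpos in
lemma Tj_pos (j : ℕ) {x : Fin K → ℝ} (hx : ∀ k, 0 < x k) (k : Fin K) : 0 < Tj Ω j x k := by
  by_cases hj : j + 1 < K
  · have hpos := hΩpos _ _ (hx ⟨j, by omega⟩) (hx ⟨j + 1, hj⟩)
    by_cases h₁ : (k : ℕ) = j
    · rw [show k = ⟨j, by omega⟩ from Fin.ext h₁]
      rwa [Tj_apply_left Ω x hj]
    by_cases h₂ : (k : ℕ) = j + 1
    · rw [show k = ⟨j + 1, hj⟩ from Fin.ext h₂]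
      rw [Tj_apply_right Ω x hj]
      exact div_pos (mul_pos (hx _) (hx _)) hpos
    rw [Tj_apply_of_ne Ω j x k h₁ h₂]
    exact hx k
  · rw [Tj_of_not_lt Ω j x hj]
    exact hx k

include hΩ in
lemma sum_Tj_le (j : ℕ) {x : Fin K → ℝ} (hx : ∀ k, 0 < x k) : ∑ k, Tj Ω j x k ≤ ∑ k, x k := by
  by_cases hj : j + 1 < K
  · rw [sum_Tj Ω x hj]
    linarith [(hΩ _ _ (hx ⟨j, by omega⟩) (hx ⟨j + 1, hj⟩)).1]
  · rw [Tj_of_not_lt Ω j x hj]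

include hΩ in
lemma eq_of_sum_Tj_eq {j : ℕ} (hj : j + 1 < K) {x : Fin K → ℝ} (hx : ∀ k, 0 < x k)
    (hsum : ∑ k, Tj Ω j x k = ∑ k, x k) : x ⟨j, by omega⟩ = x ⟨j + 1, hj⟩ := by
  rw [sum_Tj Ω x hj] at hsum
  exact (hΩ _ _ (hx _) (hx _)).2.mp (by linarith)

include hΩpos hΩ in
lemma Tj_eq_self_of_sum_eq (j : ℕ) {x : Fin K → ℝ} (hx : ∀ k, 0 < x k)
    (hsum : ∑ k, Tj Ω j x k = ∑ k, x k) : Tj Ω j x = x := by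
  by_cases hj : j + 1 < K
  · have hxj := eq_of_sum_Tj_eq hΩ hj hx hsum
    have hΩself : Ω (x ⟨j, by omega⟩) (x ⟨j + 1, hj⟩) = x ⟨j, by omega⟩ := by
      rw [sum_Tj Ω x hj, ← hxj] at hsum
      rw [← hxj]
      exact eq_of_add_mul_self_div_eq (hΩpos _ _ (hx _) (hx _)).ne' (by linarith)
    exact Tj_eq_self_of_eq Ω x hj hΩself hxj
  · exact Tj_of_not_lt Ω j x hj

include hΩpos in
lemma foldl_Tj_pos (l : List ℕ) {x : Fin K → ℝ} (hx : ∀ k, 0 < x k) :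
    ∀ k, 0 < l.foldl (fun y j => Tj Ω j y) x k := by
  induction l generalizing x with
  | nil => exact hx
  | cons j l ih => exact ih (Tj_pos hΩpos j hx)

include hΩpos hΩ in
lemma sum_foldl_Tj_le (l : List ℕ) {x : Fin K → ℝ} (hx : ∀ k, 0 < x k) :
    ∑ k, l.foldl (fun y j => Tj Ω j y) x k ≤ ∑ k, x k := by
  induction l generalizing x with
  | nil => exact le_rfl
  | cons j l ih => exact (ih (Tj_pos hΩpos j hx)).trans (sum_Tj_le hΩ j hx)

include hΩpos hΩ in
lemma adjacent_eq_of_sum_foldl_Tj_eq (l : List ℕ) {x : Fin K → ℝ} (hx : ∀ k, 0 < x k)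
    (hsum : ∑ k, l.foldl (fun y j => Tj Ω j y) x k = ∑ k, x k) :
    ∀ j ∈ l, ∀ hj : j + 1 < K, x ⟨j, by omega⟩ = x ⟨j + 1, hj⟩ := by
  induction l generalizing x with
  | nil => simp
  | cons j l ih =>
    have hTx := Tj_pos hΩpos j hx
    have hle := sum_foldl_Tj_le hΩpos hΩ l hTx
    have hstep : ∑ k, Tj Ω j x k = ∑ k, x k :=
      le_antisymm (sum_Tj_le hΩ j hx) (hsum ▸ hle)
    have hfix := Tj_eq_self_of_sum_eq hΩpos hΩ j hx hstep
    rw [List.foldl_cons, hfix] at hsum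
    intro i hi hj
    rcases List.mem_cons.mp hi with rfl | hi
    · exact eq_of_sum_Tj_eq hΩ hj hx hstep
    · exact ih hx hsum i hi hj

end Sweep

theorem T_sum_decrease_and_equality_general (K : ℕ)
    (x : Fin K → ℝ) (hx : ∀ k, 0 < x k)
    (Ω : ℝ → ℝ → ℝ)
    (hΩpos : ∀ z1 z2 : ℝ, 0 < z1 → 0 < z2 → 0 < Ω z1 z2)
    (hΩ : ∀ z1 z2 : ℝ, 0 < z1 → 0 < z2 →
      Ω z1 z2 + z1 * z2 / Ω z1 z2 ≤ z1 + z2 ∧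
      (Ω z1 z2 + z1 * z2 / Ω z1 z2 = z1 + z2 ↔ z1 = z2)) :
    ∑ k, Tfull Ω x k ≤ ∑ k, x k ∧
    (∑ k, Tfull Ω x k = ∑ k, x k → ∀ k k' : Fin K, x k = x k') := by
  refine ⟨sum_foldl_Tj_le hΩpos hΩ _ hx, fun hsum => Fin.eq_of_forall_adjacent_eq x ?_⟩
  intro j hj
  exact adjacent_eq_of_sum_foldl_Tj_eq hΩpos hΩ _ hx hsum j (List.mem_range.mpr (by omega)) hj

theorem T_sum_decrease_and_equality (K : ℕ) (hK : 2 ≤ K)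
    (x : Fin K → ℝ) (hx : ∀ k, 0 < x k)
    (Ω : ℝ → ℝ → ℝ)
    (hΩpos : ∀ z1 z2 : ℝ, 0 < z1 → 0 < z2 → 0 < Ω z1 z2)
    (hΩ : ∀ z1 z2 : ℝ, 0 < z1 → 0 < z2 →
      Ω z1 z2 + z1 * z2 / Ω z1 z2 ≤ z1 + z2 ∧
      (Ω z1 z2 + z1 * z2 / Ω z1 z2 = z1 + z2 ↔ z1 = z2)) :
    ∑ k, Tfull Ω x k ≤ ∑ k, x k ∧
    (∑ k, Tfull Ω x k = ∑ k, x k → ∀ k k' : Fin K, x k = x k') :=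
  T_sum_decrease_and_equality_general K x hx Ω hΩpos hΩ
end

section
/- Let Σ = diag(σ1, σ2) with σ1 ≥ σ2 > 0 and let ω satisfy σ2 ≤ ω ≤ σ1. Define c = √((ω² − σ2²)/(σ1² − σ2²)) (when σ1 > σ2), s = √(1−c²), Φ_L = (1/ω)·[[c σ1, s σ2],[−s σ2, c σ1]], and Φ_R = [[c, −s],[s, c]]. Then Φ_L Σ Φ_R is upper triangular with diagonal entries ω and σ1σ2/ω. -/
open Matrix

/-!
For any `c, s`, the product `ΦL Σ ΦR` is `(1/ω)` times
`[[c²σ1² + s²σ2², -cs(σ1² - σ2²)], [0, (c² + s²)σ1σ2]]`, so it is always upper triangular.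
Choosing `c²` as the weight that interpolates `ω²` between `σ2²` and `σ1²`, and `s² = 1 - c²`,
turns the top-left entry into `ω²/ω` and the bottom-right one into `σ1σ2/ω`.
-/

lemma sub_div_sub_mem_Icc {a x b : ℝ} (hax : a ≤ x) (hxb : x ≤ b) :
    (x - a) / (b - a) ∈ Set.Icc 0 1 := by
  rcases hxb.lt_or_eq with hxb | rfl
  · exact ⟨div_nonneg (by linarith) (by linarith),
      (div_le_one (by linarith)).2 (by linarith)⟩
  · rcases (sub_nonneg.2 hax).lt_or_eq with h | h
    · simp [div_self h.ne']
    · simp [← h]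

/-- Also true when `a = b`, since then `x = a` and the weight is `0 / 0 = 0`. -/
lemma sub_div_sub_mul_add_one_sub_mul {a x b : ℝ} (hax : a ≤ x) (hxb : x ≤ b) :
    (x - a) / (b - a) * b + (1 - (x - a) / (b - a)) * a = x := by
  rcases eq_or_ne b a with rfl | hba
  · simp [le_antisymm hxb hax]
  · field_simp [sub_ne_zero.2 hba]
    ring

lemma scaledRotation_mul_diagonal_mul_rotation (c s σ1 σ2 ω : ℝ) :
    (1 / ω) • !![c * σ1, s * σ2; -(s * σ2), c * σ1] * !![σ1, 0; 0, σ2] * !![c, -s; s, c] =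
      (1 / ω) • !![c ^ 2 * σ1 ^ 2 + s ^ 2 * σ2 ^ 2, -(c * s * (σ1 ^ 2 - σ2 ^ 2));
        0, (c ^ 2 + s ^ 2) * σ1 * σ2] := by
  rw [smul_mul, smul_mul, mul_fin_two, mul_fin_two]
  congr 1
  ext i j
  fin_cases i <;> fin_cases j <;> simp <;> ring

theorem planar_rotation_triangularize_general (σ1 σ2 ω : ℝ)
    (hσ2 : 0 < σ2) (hω1 : σ2 ≤ ω) (hω2 : ω ≤ σ1) :
    let c : ℝ := Real.sqrt ((ω ^ 2 - σ2 ^ 2) / (σ1 ^ 2 - σ2 ^ 2))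
    let s : ℝ := Real.sqrt (1 - c ^ 2)
    let ΦL : Matrix (Fin 2) (Fin 2) ℝ :=
      (1 / ω) • !![c * σ1, s * σ2; -(s * σ2), c * σ1]
    let ΦR : Matrix (Fin 2) (Fin 2) ℝ := !![c, -s; s, c]
    let Sig : Matrix (Fin 2) (Fin 2) ℝ := !![σ1, 0; 0, σ2]
    (ΦL * Sig * ΦR) 1 0 = 0 ∧ (ΦL * Sig * ΦR) 0 0 = ω ∧
      (ΦL * Sig * ΦR) 1 1 = σ1 * σ2 / ω := by
  intro c s ΦL ΦR Sig
  have hω : 0 < ω := hσ2.trans_le hω1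
  have hlow : σ2 ^ 2 ≤ ω ^ 2 := pow_le_pow_left₀ hσ2.le hω1 2
  have hupp : ω ^ 2 ≤ σ1 ^ 2 := pow_le_pow_left₀ hω.le hω2 2
  obtain ⟨ht0, ht1⟩ := sub_div_sub_mem_Icc hlow hupp
  have hc2 : c ^ 2 = (ω ^ 2 - σ2 ^ 2) / (σ1 ^ 2 - σ2 ^ 2) := Real.sq_sqrt ht0
  have hs2 : s ^ 2 = 1 - c ^ 2 := Real.sq_sqrt (by linarith)
  have hunit : c ^ 2 + s ^ 2 = 1 := by rw [hs2]; ring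
  have hdiag : c ^ 2 * σ1 ^ 2 + s ^ 2 * σ2 ^ 2 = ω ^ 2 := by
    rw [hs2, hc2]
    exact sub_div_sub_mul_add_one_sub_mul hlow hupp
  simp only [ΦL, ΦR, Sig, scaledRotation_mul_diagonal_mul_rotation, hunit, hdiag]
  refine ⟨by simp, ?_, ?_⟩ <;> simp <;> field_simp

theorem planar_rotation_triangularize (σ1 σ2 ω : ℝ)
    (hσ2 : 0 < σ2) (hσ : σ2 < σ1) (hω1 : σ2 ≤ ω) (hω2 : ω ≤ σ1) :
    let c : ℝ := Real.sqrt ((ω ^ 2 - σ2 ^ 2) / (σ1 ^ 2 - σ2 ^ 2))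
    let s : ℝ := Real.sqrt (1 - c ^ 2)
    let ΦL : Matrix (Fin 2) (Fin 2) ℝ :=
      (1 / ω) • !![c * σ1, s * σ2; -(s * σ2), c * σ1]
    let ΦR : Matrix (Fin 2) (Fin 2) ℝ := !![c, -s; s, c]
    let Sig : Matrix (Fin 2) (Fin 2) ℝ := !![σ1, 0; 0, σ2]
    (ΦL * Sig * ΦR) 1 0 = 0 ∧ (ΦL * Sig * ΦR) 0 0 = ω ∧
      (ΦL * Sig * ΦR) 1 1 = σ1 * σ2 / ω :=
  planar_rotation_triangularize_general σ1 σ2 ω hσ2 hω1 hω2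
end
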